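/- arXiv:1301.3321 — 8 statements merged into one kernel-verified Lean document; each statement's English description precedes it below -/
import Mathlib

section
/- A sequence (d_1,...,d_n) of nonnegative reals is the degree sequence of an undirected graph on n vertices with nonnegative real edge weights if and only if max_i d_i ≤ (1/2)·∑_{i=1}^n d_i. -/
/-!
Lay the degrees out as consecutive arcs `I i` of lengths `d i` on a circle of circumference
`S = ∑ d i`, and let `a i j` be the length of the part of `I i` whose antipodes lie in `I j`.
Antipodality is an involution, so `a` is symmetric; the antipodal images of the arcs again tile
the circle, so row `i` sums to `d i`; and an arc of length `d i ≤ S / 2` contains no antipodal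
pair, so `a i i = 0`. Conversely `d i = ∑_{j ≠ i} a j i ≤ ∑_{j ≠ i} d j`.
-/

open Finset MeasureTheory

theorem measure_inter_preimage_add_right_comm {G : Type*} [AddGroup G] [MeasurableSpace G]
    [MeasurableAdd G] (μ : Measure G) [μ.IsAddRightInvariant] (A B : Set G) (t : G) :
    μ (A ∩ (· + t) ⁻¹' B) = μ (B ∩ (· - t) ⁻¹' A) := by
  rw [← measure_preimage_add_right μ t (B ∩ (· - t) ⁻¹' A)]
  congr 1
  ext x
  simp [and_comm]

section AntipodalWeight

variable {ι : Type*} (I : ι → Set ℝ) (h : ℝ)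

/-- The circle `ℝ / 2hℤ` is unrolled to `Set.Ioc 0 (2 * h)`, where the antipode of `x` is
`x + h` or `x - h`. -/
noncomputable def antipodalWeight (i j : ι) : ℝ :=
  volume.real (I i ∩ (· + h) ⁻¹' I j) + volume.real (I i ∩ (· - h) ⁻¹' I j)

theorem antipodalWeight_comm (i j : ι) : antipodalWeight I h i j = antipodalWeight I h j i := by
  simp only [antipodalWeight, measureReal_def]
  rw [measure_inter_preimage_add_right_comm volume (I i),
    measure_inter_preimage_add_right_comm volume (I j), add_comm]

variable {I h}

theorem antipodalWeight_self {i : ι} (hI : ∀ x ∈ I i, x + h ∉ I i) :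
    antipodalWeight I h i i = 0 := by
  have hplus : I i ∩ (· + h) ⁻¹' I i = ∅ := by
    ext x
    simpa using hI x
  have hminus : I i ∩ (· - h) ⁻¹' I i = ∅ := by
    ext x
    simpa using fun hx hx' => hI _ hx' (by simpa using hx)
  simp [antipodalWeight, hplus, hminus]

theorem sum_antipodalWeight [Fintype ι] (hmeas : ∀ j, MeasurableSet (I j))
    (hdisj : Pairwise (Function.onFun Disjoint I)) (hcover : ⋃ j, I j = Set.Ioc 0 (2 * h)) (i : ι) :
    ∑ j, antipodalWeight I h i j = volume.real (I i) := by
  have hsub : I i ⊆ Set.Ioc 0 (2 * h) := hcover ▸ Set.subset_iUnion I i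
  have hfin : volume (I i) ≠ ⊤ := measure_ne_top_of_subset hsub measure_Ioc_lt_top.ne
  have hsum (f : ℝ → ℝ) (hf : Measurable f) :
      ∑ j, volume.real (I i ∩ f ⁻¹' I j) = volume.real (I i ∩ f ⁻¹' Set.Ioc 0 (2 * h)) := by
    rw [← hcover, Set.preimage_iUnion, Set.inter_iUnion, measureReal_iUnion_fintype]
    · exact fun j k hjk =>
        ((hdisj hjk).preimage f).mono Set.inter_subset_right Set.inter_subset_right
    · exact fun j => (hmeas i).inter ((hmeas j).preimage hf)
  have hsplit : I i ∩ (· - h) ⁻¹' Set.Ioc 0 (2 * h) = I i \ (· + h) ⁻¹' Set.Ioc 0 (2 * h) := by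
    ext x
    simp only [Set.mem_inter_iff, Set.mem_sdiff, Set.mem_preimage, Set.mem_Ioc]
    refine and_congr_right fun hx => ?_
    have := hsub hx
    rw [Set.mem_Ioc] at this
    constructor
    · rintro ⟨h₁, -⟩ ⟨-, h₂⟩
      linarith
    · intro h'
      rw [not_and_or, not_lt, not_le] at h'
      constructor <;> rcases h' with h' | h' <;> linarith
  simp only [antipodalWeight, sum_add_distrib, hsum _ (measurable_add_const h),
    hsum _ (measurable_sub_const h), hsplit]
  exact measureReal_inter_add_sdiff (measurableSet_Ioc.preimage (measurable_add_const h)) hfin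

end AntipodalWeight

section PrefixSum

variable {n : ℕ} (d : Fin n → ℝ)

def prefixSum (k : ℕ) : ℝ := ∑ j with j.val < k, d j

def prefixIoc (j : Fin n) : Set ℝ := Set.Ioc (prefixSum d j) (prefixSum d (j + 1))

variable {d}

theorem prefixSum_zero : prefixSum d 0 = 0 := by simp [prefixSum]

theorem prefixSum_self : prefixSum d n = ∑ j, d j := by simp [prefixSum]

theorem prefixSum_succ (j : Fin n) : prefixSum d (j + 1) = prefixSum d j + d j := by
  have : univ.filter (fun i : Fin n => i.val < j.val + 1) =
      insert j (univ.filter fun i : Fin n => i.val < j.val) := by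
    ext i
    simp only [mem_filter, mem_univ, true_and, mem_insert, Fin.ext_iff]
    omega
  simp only [prefixSum]
  rw [this, sum_insert (by simp), add_comm]

theorem monotone_prefixSum (hd : ∀ j, 0 ≤ d j) : Monotone (prefixSum d) := fun _ _ hkl =>
  sum_le_sum_of_subset_of_nonneg (monotone_filter_right _ fun _ _ hj => hj.trans_le hkl)
    fun j _ _ => hd j

theorem iUnion_prefixIoc (hd : ∀ j, 0 ≤ d j) : ⋃ j, prefixIoc d j = Set.Ioc 0 (∑ j, d j) := by
  rw [← prefixSum_zero, ← prefixSum_self,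
    ← (monotone_prefixSum hd).biUnion_Ico_Ioc_map_succ 0 n]
  ext x
  simp only [prefixIoc, Set.mem_iUnion, Set.mem_Ioc, Set.mem_Ico, Order.succ_eq_add_one,
    exists_prop]
  exact ⟨fun ⟨i, hi⟩ => ⟨i, ⟨i.val.zero_le, i.2⟩, hi⟩,
    fun ⟨i, ⟨_, hin⟩, hi⟩ => ⟨⟨i, hin⟩, hi⟩⟩

theorem measurableSet_prefixIoc (j : Fin n) : MeasurableSet (prefixIoc d j) := measurableSet_Ioc

theorem pairwise_disjoint_prefixIoc (hd : ∀ j, 0 ≤ d j) :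
    Pairwise (Function.onFun Disjoint (prefixIoc d)) :=
  (monotone_prefixSum hd).pairwise_disjoint_on_Ioc_succ.comp_of_injective Fin.val_injective

theorem volume_real_prefixIoc (hd : ∀ j, 0 ≤ d j) (j : Fin n) :
    volume.real (prefixIoc d j) = d j := by
  rw [prefixIoc, prefixSum_succ, Real.volume_real_Ioc_of_le (le_add_of_nonneg_right (hd j))]
  ring

theorem add_notMem_prefixIoc {j : Fin n} {x h : ℝ} (hj : d j ≤ h) (hx : x ∈ prefixIoc d j) :
    x + h ∉ prefixIoc d j := by
  rw [prefixIoc, prefixSum_succ, Set.mem_Ioc] at *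
  intro hxh
  linarith [hx.1, hxh.2]

end PrefixSum

theorem exists_matrix_of_le_half_sum {n : ℕ} {d : Fin n → ℝ} (hd : ∀ i, 0 ≤ d i)
    (h : ∀ i, d i ≤ (1 / 2) * ∑ j, d j) :
    ∃ a : Matrix (Fin n) (Fin n) ℝ, (∀ i j, 0 ≤ a i j) ∧ (∀ i j, a i j = a j i) ∧
      (∀ i, a i i = 0) ∧ ∀ i, d i = ∑ j ∈ univ.erase i, a i j := by
  set r : ℝ := 1 / 2 * ∑ j, d j with hr
  have hdiag (i) : antipodalWeight (prefixIoc d) r i i = 0 :=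
    antipodalWeight_self fun x => add_notMem_prefixIoc (h i)
  refine ⟨antipodalWeight (prefixIoc d) r, fun i j => ?_, antipodalWeight_comm _ _, hdiag,
    fun i => ?_⟩
  · exact add_nonneg measureReal_nonneg measureReal_nonneg
  · have hcover : ⋃ j, prefixIoc d j = Set.Ioc 0 (2 * r) := by
      rw [iUnion_prefixIoc hd, hr]
      ring_nf
    rw [sum_erase _ (hdiag i), sum_antipodalWeight measurableSet_prefixIoc
      (pairwise_disjoint_prefixIoc hd) hcover, volume_real_prefixIoc hd]

theorem le_sum_erase_of_eq_sum_erase {ι : Type*} [Fintype ι] [DecidableEq ι] {a : Matrix ι ι ℝ}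
    {d : ι → ℝ} (ha : ∀ i j, 0 ≤ a i j) (hsymm : ∀ i j, a i j = a j i)
    (hd : ∀ i, d i = ∑ j ∈ univ.erase i, a i j) (i : ι) : d i ≤ ∑ j ∈ univ.erase i, d j := by
  rw [hd i]
  refine sum_le_sum fun j hj => ?_
  rw [hsymm, hd j]
  exact single_le_sum (fun k _ => ha j k) (mem_erase.2 ⟨(ne_of_mem_erase hj).symm, mem_univ i⟩)

theorem continuous_graphical_iff_general (n : ℕ) (d : Fin n → ℝ) (hd : ∀ i, 0 ≤ d i) :
    (∃ a : Matrix (Fin n) (Fin n) ℝ, (∀ i j, 0 ≤ a i j) ∧ (∀ i j, a i j = a j i) ∧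
      (∀ i, a i i = 0) ∧ ∀ i, d i = ∑ j ∈ Finset.univ.erase i, a i j) ↔
    (∀ i, d i ≤ (1 / 2) * ∑ j, d j) := by
  refine ⟨fun ⟨a, ha, hsymm, _, hdeg⟩ i => ?_, exists_matrix_of_le_half_sum hd⟩
  have := le_sum_erase_of_eq_sum_erase ha hsymm hdeg i
  rw [sum_erase_eq_sub (mem_univ i)] at this
  linarith

theorem continuous_graphical_iff (n : ℕ) (hn : 3 ≤ n) (d : Fin n → ℝ) (hd : ∀ i, 0 ≤ d i) :
    (∃ a : Matrix (Fin n) (Fin n) ℝ, (∀ i j, 0 ≤ a i j) ∧ (∀ i j, a i j = a j i) ∧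
      (∀ i, a i i = 0) ∧ ∀ i, d i = ∑ j ∈ Finset.univ.erase i, a i j) ↔
    (∀ i, d i ≤ (1 / 2) * ∑ j, d j) :=
  continuous_graphical_iff_general n d hd
end

section
/- A sequence (d_1,...,d_n) of nonnegative integers is the degree sequence of an undirected graph with edge weights in ℕ₀ = {0,1,2,...} if and only if ∑_{i=1}^n d_i is even and max_i d_i ≤ (1/2)·∑_{i=1}^n d_i. -/
open Finset

private lemma even_sum_symm {n : ℕ} (a : Matrix (Fin n) (Fin n) ℕ)
    (hsymm : ∀ i j, a i j = a j i) (hdiag : ∀ i, a i i = 0) :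
    Even (∑ i, ∑ j, a i j) := by
  have h1 : ∑ i, ∑ j, a i j = ∑ p : Fin n × Fin n, a p.1 p.2 :=
    (Fintype.sum_prod_type (f := fun p : Fin n × Fin n => a p.1 p.2)).symm
  have h2 : ∑ p : Fin n × Fin n, a p.1 p.2 =
      ∑ p : Fin n × Fin n, ((if p.1 < p.2 then a p.1 p.2 else 0) +
        (if p.2 < p.1 then a p.1 p.2 else 0)) := by
    refine Finset.sum_congr rfl fun p _ => ?_
    rcases lt_trichotomy p.1 p.2 with h | h | h
    · simp [h, not_lt_of_gt h]
    · simp [h, hdiag]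
    · simp [h, not_lt_of_gt h]
  have h3 : ∑ p : Fin n × Fin n, (if p.2 < p.1 then a p.1 p.2 else 0) =
      ∑ p : Fin n × Fin n, (if p.1 < p.2 then a p.1 p.2 else 0) := by
    refine Fintype.sum_equiv (Equiv.prodComm (Fin n) (Fin n)) _ _ fun p => ?_
    simp [Equiv.prodComm, hsymm p.2 p.1]
  rw [h1, h2, Finset.sum_add_distrib, h3]
  exact ⟨_, rfl⟩

private lemma construct : ∀ s : ℕ, ∀ (n : ℕ) (d : Fin n → ℕ), ∑ i, d i = s → Even s →
    (∀ i, 2 * d i ≤ s) →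
    ∃ a : Matrix (Fin n) (Fin n) ℕ, (∀ i j, a i j = a j i) ∧ (∀ i, a i i = 0) ∧
      ∀ i, d i = ∑ j ∈ Finset.univ.erase i, a i j := by
  intro s
  induction s using Nat.strong_induction_on with
  | _ s ih =>
    intro n d hsum heven hmax
    rcases Nat.eq_zero_or_pos s with hs | hs
    · subst hs
      have hzero : ∀ i, d i = 0 := by
        intro i
        exact Finset.sum_eq_zero_iff.mp hsum i (mem_univ i)
      exact ⟨0, by simp, by simp, fun i => by simp [hzero i, Matrix.zero_apply]⟩
    · obtain ⟨t, ht⟩ := heven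
      have hs2 : 2 ≤ s := by omega
      -- find i₀ with d i₀ > 0
      have hex : ∃ i₀, d i₀ ≠ 0 := by
        by_contra h
        push_neg at h
        have : ∑ i, d i = 0 := Finset.sum_eq_zero fun i _ => h i
        omega
      obtain ⟨i₀, hi₀⟩ := hex
      obtain ⟨i, -, hi⟩ := Finset.exists_max_image univ d ⟨i₀, mem_univ i₀⟩
      have hdi : 0 < d i := lt_of_lt_of_le (Nat.pos_of_ne_zero hi₀) (hi i₀ (mem_univ i₀))
      -- s = d i + rest
      have hrest : d i + ∑ k ∈ univ.erase i, d k = s := by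
        rw [Finset.add_sum_erase univ d (mem_univ i)]; exact hsum
      have hrestpos : 0 < ∑ k ∈ univ.erase i, d k := by
        have := hmax i; omega
      have hexj : ∃ j₀ ∈ univ.erase i, d j₀ ≠ 0 := by
        by_contra h
        push_neg at h
        have : ∑ k ∈ univ.erase i, d k = 0 := Finset.sum_eq_zero fun k hk => h k hk
        omega
      obtain ⟨j₀, hj₀mem, hj₀⟩ := hexj
      obtain ⟨j, hjmem, hj⟩ := Finset.exists_max_image (univ.erase i) d ⟨j₀, hj₀mem⟩
      have hji : j ≠ i := (Finset.mem_erase.mp hjmem).1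
      have hdj : 0 < d j := lt_of_lt_of_le (Nat.pos_of_ne_zero hj₀) (hj j₀ hj₀mem)
      set d' : Fin n → ℕ := Function.update (Function.update d i (d i - 1)) j (d j - 1)
        with hd'def
      have hd'i : d' i = d i - 1 := by
        simp [hd'def, Function.update, hji.symm, hji]
      have hd'j : d' j = d j - 1 := by simp [hd'def]
      have hd'k : ∀ k, k ≠ i → k ≠ j → d' k = d k := by
        intro k hki hkj
        simp [hd'def, Function.update, hki, hkj]
      -- sum of d'
      have hsum' : ∑ k, d' k = s - 2 := by
        have e1 : ∑ k, d' k = (d j - 1) + ∑ k ∈ univ.erase j,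
            Function.update d i (d i - 1) k := by
          rw [hd'def, Finset.sum_update_of_mem (mem_univ j), Finset.sdiff_singleton_eq_erase]
        have e2 : ∑ k ∈ univ.erase j, Function.update d i (d i - 1) k =
            (d i - 1) + ∑ k ∈ (univ.erase j).erase i, d k := by
          rw [Finset.sum_update_of_mem (Finset.mem_erase.mpr ⟨Ne.symm hji, mem_univ i⟩),
            Finset.sdiff_singleton_eq_erase]
        have e3 : d j + ∑ k ∈ univ.erase j, d k = s := by
          rw [Finset.add_sum_erase univ d (mem_univ j)]; exact hsum
        have e4 : d i + ∑ k ∈ (univ.erase j).erase i, d k = ∑ k ∈ univ.erase j, d k := by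
          rw [Finset.add_sum_erase _ d (Finset.mem_erase.mpr ⟨Ne.symm hji, mem_univ i⟩)]
        omega
      have heven' : Even (s - 2) := ⟨t - 1, by omega⟩
      have hmax' : ∀ k, 2 * d' k ≤ s - 2 := by
        intro k
        by_cases hki : k = i
        · subst hki; rw [hd'i]; have := hmax k; omega
        · by_cases hkj : k = j
          · subst hkj; rw [hd'j]; have := hmax k; omega
          · rw [hd'k k hki hkj]
            have hk2 : 2 * d k ≤ s := hmax k
            have hkj' : d k ≤ d j := hj k (Finset.mem_erase.mpr ⟨hki, mem_univ k⟩)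
            have hki' : d k ≤ d i := hi k (mem_univ k)
            have hsub : ({i, j, k} : Finset (Fin n)) ⊆ univ := Finset.subset_univ _
            have h3 : d i + d j + d k ≤ s := by
              have := Finset.sum_le_sum_of_subset (f := d) hsub
              rw [Finset.sum_insert (by simp [Ne.symm hji, Ne.symm hki]),
                Finset.sum_insert (by simp [Ne.symm hkj]), Finset.sum_singleton] at this
              omega
            omega
      obtain ⟨a', ha'symm, ha'diag, ha'deg⟩ := ih (s - 2) (by omega) n d' hsum' heven' hmax'
      refine ⟨fun p q => a' p q + (if (p = i ∧ q = j) ∨ (p = j ∧ q = i) then 1 else 0),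
        ?_, ?_, ?_⟩
      · intro p q
        have : ((p = i ∧ q = j) ∨ (p = j ∧ q = i)) ↔ ((q = i ∧ p = j) ∨ (q = j ∧ p = i)) := by
          tauto
        dsimp only
        rw [ha'symm p q]
        simp only [this]
      · intro p
        have : ¬ ((p = i ∧ p = j) ∨ (p = j ∧ p = i)) := by
          rintro (⟨h1, h2⟩ | ⟨h1, h2⟩) <;> exact hji (h2 ▸ h1 ▸ rfl)
        simp [ha'diag p, this]
      · intro k
        rw [Finset.sum_add_distrib, ← ha'deg k]
        have hsumite : ∑ m ∈ univ.erase k, (if (k = i ∧ m = j) ∨ (k = j ∧ m = i) then 1 else 0)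
            = if k = i then 1 else (if k = j then 1 else 0) := by
          by_cases hki : k = i
          · have hkj : k ≠ j := fun h => hji (h.symm.trans hki)
            have : ∀ m ∈ univ.erase k,
                (if (k = i ∧ m = j) ∨ (k = j ∧ m = i) then (1:ℕ) else 0)
                = if m = j then 1 else 0 := by
              intro m _
              simp [hki, hkj, Ne.symm hji]
            rw [Finset.sum_congr rfl this, Finset.sum_ite_eq' (univ.erase k) j (fun _ => 1),
              if_pos (Finset.mem_erase.mpr ⟨fun h => hji (h.trans hki), mem_univ j⟩), if_pos hki]
          · by_cases hkj : k = j
            · have : ∀ m ∈ univ.erase k,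
                  (if (k = i ∧ m = j) ∨ (k = j ∧ m = i) then (1:ℕ) else 0)
                  = if m = i then 1 else 0 := by
                intro m _
                simp [hki, hkj, hji]
              rw [Finset.sum_congr rfl this, Finset.sum_ite_eq' (univ.erase k) i (fun _ => 1),
                if_pos (Finset.mem_erase.mpr ⟨fun h => hji ((h.trans hkj).symm), mem_univ i⟩),
                if_neg hki, if_pos hkj]
            · have : ∀ m ∈ univ.erase k,
                  (if (k = i ∧ m = j) ∨ (k = j ∧ m = i) then (1:ℕ) else 0) = 0 := by
                intro m _
                simp [hki, hkj]
              rw [Finset.sum_congr rfl this, Finset.sum_const_zero, if_neg hki, if_neg hkj]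
        rw [hsumite]
        by_cases hki : k = i
        · subst hki
          rw [if_pos rfl, hd'i]
          omega
        · by_cases hkj : k = j
          · subst hkj
            rw [if_neg hki, if_pos rfl, hd'j]
            omega
          · rw [if_neg hki, if_neg hkj, hd'k k hki hkj]
            omega

theorem infinite_discrete_graphical_iff (n : ℕ) (d : Fin n → ℕ) :
    (∃ a : Matrix (Fin n) (Fin n) ℕ, (∀ i j, a i j = a j i) ∧
      (∀ i, a i i = 0) ∧ ∀ i, d i = ∑ j ∈ Finset.univ.erase i, a i j) ↔
    (Even (∑ i, d i) ∧ ∀ i, 2 * d i ≤ ∑ j, d j) := by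
  constructor
  · rintro ⟨a, hsymm, hdiag, hdeg⟩
    have hde : ∀ i, d i = ∑ j, a i j := by
      intro i
      rw [hdeg i, Finset.sum_erase _ (hdiag i)]
    constructor
    · have : ∑ i, d i = ∑ i, ∑ j, a i j := Finset.sum_congr rfl fun i _ => hde i
      rw [this]
      exact even_sum_symm a hsymm hdiag
    · intro i
      have hle : ∀ j, j ≠ i → a i j ≤ d j := by
        intro j hj
        rw [hdeg j]
        rw [hsymm i j]
        exact Finset.single_le_sum (f := fun m => a j m) (fun _ _ => Nat.zero_le _)
          (Finset.mem_erase.mpr ⟨Ne.symm hj, mem_univ i⟩)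
      have h1 : d i ≤ ∑ j ∈ univ.erase i, d j := by
        rw [hdeg i]
        exact Finset.sum_le_sum fun j hj => hle j (Finset.mem_erase.mp hj).1
      have h2 : d i + ∑ j ∈ univ.erase i, d j = ∑ j, d j :=
        Finset.add_sum_erase univ d (mem_univ i)
      omega
  · rintro ⟨heven, hmax⟩
    exact construct (∑ i, d i) n d rfl heven hmax
end

section
/- Let r ≥ 2. A sequence (d_1,...,d_n) of nonnegative integers with d_1 ≥ d_2 ≥ ... ≥ d_n is the degree sequence of an undirected graph with edge weights in {0,1,...,r-1} if and only if ∑_{i=1}^n d_i is even and for every k = 1,...,n, ∑_{i=1}^k d_i ≤ (r-1)k(k-1) + ∑_{j=k+1}^n min{d_j, (r-1)k}. -/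
/-!
Necessity: for a vertex set `S`, the weight on edges inside `S` is at most `c |S| (|S| - 1)`,
and a vertex `j ∉ S` receives at most `min (d j) (c |S|)` from `S`; parity is the handshake lemma.
For an antitone sequence the prefix inequalities imply the same inequality for every vertex set,
and sufficiency is proved from that form by induction. Let `v` have maximal degree. The
inequality for `{v}` says `d v ≤ ∑_{j ≠ v} min (d j) c`. If it is an equality, join `v` to every
`j` with weight `min (d j) c` and realize the residual sequence, which lowers the total degree.
Otherwise move one unit of degree to `v` from the largest other vertex `s`; the total is unchanged
and `∑ dᵢ²` grows. In a realization of the new sequence the row of `v` outweighs the row of `s`,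
so some `u` has `a v u > a s u`, and moving one unit of weight from the edge `vu` to `su`
realizes `d`.
-/

open Finset

theorem sum_le_sum_of_card_eq {ι M : Type*} [AddCommMonoid M] [LinearOrder M] [AddLeftMono M]
    {f : ι → M} {A B : Finset ι} (hAB : #A = #B) (h : ∀ x ∈ A, ∀ y ∈ B, f x ≤ f y) :
    ∑ x ∈ A, f x ≤ ∑ y ∈ B, f y := by
  obtain rfl | hB := B.eq_empty_or_nonempty
  · rw [card_empty, card_eq_zero] at hAB
    rw [hAB]
  obtain ⟨y, hy, hmin⟩ := exists_min_image B f hB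
  calc ∑ x ∈ A, f x ≤ #A • f y := sum_le_card_nsmul _ _ _ fun x hx => h x hx y hy
    _ = #B • f y := by rw [hAB]
    _ ≤ ∑ y ∈ B, f y := card_nsmul_le_sum _ _ _ hmin

theorem Antitone.sum_le_sum_filter_lt {n : ℕ} {M : Type*} [AddCommMonoid M] [LinearOrder M]
    [AddLeftMono M] {g : Fin n → M} (hg : Antitone g) (S : Finset (Fin n)) :
    ∑ i ∈ S, g i ≤ ∑ i ∈ {i : Fin n | (i : ℕ) < #S}, g i := by
  set P : Finset (Fin n) := {i : Fin n | (i : ℕ) < #S}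
  have hP : #P = #S := by
    rw [Fin.card_filter_val_lt, min_eq_right ((card_le_univ S).trans_eq (Fintype.card_fin n))]
  rw [← sum_inter_add_sum_sdiff S P, ← sum_inter_add_sum_sdiff P S, inter_comm]
  refine add_le_add le_rfl (sum_le_sum_of_card_eq (card_sdiff_comm hP.symm) fun x hx y hy => hg ?_)
  simp only [P, mem_sdiff, mem_filter, mem_univ, true_and] at hx hy
  exact Fin.le_iff_val_le_val.2 (hy.1.le.trans (not_lt.1 hx.2))

section Compl

variable {α M : Type*} [Fintype α] [DecidableEq α] [AddCommMonoid M] {v : α} {S : Finset α}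

theorem sum_compl_singleton_of_mem (hv : v ∈ S) (f : α → M) :
    ∑ j ∈ {v}ᶜ, f j = ∑ j ∈ S.erase v, f j + ∑ j ∈ Sᶜ, f j := by
  rw [← sum_union (disjoint_left.2 fun j hj hj' => mem_compl.1 hj' (mem_of_mem_erase hj))]
  congr 1
  ext j
  by_cases hjS : j ∈ S <;> by_cases hjv : j = v <;> simp_all

theorem sum_compl_singleton_of_notMem (hv : v ∉ S) (f : α → M) :
    ∑ j ∈ {v}ᶜ, f j = ∑ j ∈ S, f j + ∑ j ∈ Sᶜ.erase v, f j := by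
  rw [← sum_union (disjoint_left.2 fun j hj hj' => mem_compl.1 (mem_of_mem_erase hj') hj)]
  congr 1
  ext j
  by_cases hjS : j ∈ S <;> by_cases hjv : j = v <;> simp_all

end Compl

theorem mul_min_add_min_le (x c m : ℕ) :
    m * min x (c * (m + 1 + 1)) + min x c ≤ (m + 1) * min x (c * (m + 1)) := by
  rcases le_or_gt x (c * (m + 1)) with hx | hx
  · rw [min_eq_left (hx.trans (Nat.mul_le_mul_left c (Nat.le_succ _))), min_eq_left hx]
    nlinarith [min_le_left x c]
  · have hc : c ≤ x := (Nat.le_mul_of_pos_right c m.succ_pos).trans hx.le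
    rw [min_eq_right hc, min_eq_right hx.le]
    nlinarith [min_le_right x (c * (m + 1 + 1))]

namespace ErdosGallai

variable {n : ℕ}

structure IsRealization (c : ℕ) (d : Fin n → ℕ) (a : Matrix (Fin n) (Fin n) ℕ) : Prop where
  le : ∀ i j, a i j ≤ c
  symm : ∀ i j, a i j = a j i
  diag : ∀ i, a i i = 0
  sum_row : ∀ i, ∑ j, a i j = d i

def bound (c : ℕ) (d : Fin n → ℕ) (S : Finset (Fin n)) : ℕ :=
  c * #S * (#S - 1) + ∑ j ∈ Sᶜ, min (d j) (c * #S)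

def Condition (c : ℕ) (d : Fin n → ℕ) : Prop :=
  ∀ S : Finset (Fin n), ∑ i ∈ S, d i ≤ bound c d S

variable {c : ℕ} {d : Fin n → ℕ} {s v : Fin n}

theorem IsRealization.even_sum {a : Matrix (Fin n) (Fin n) ℕ} (h : IsRealization c d a) :
    Even (∑ i, d i) := by
  have hsum : ∑ i, d i = ∑ p : Fin n × Fin n, a p.1 p.2 := by
    simp only [← h.sum_row, Fintype.sum_prod_type]
  rw [hsum, ← ZMod.natCast_eq_zero_iff_even, Nat.cast_sum]
  refine sum_involution (fun p _ => p.swap) (fun p _ => ?_) (fun p _ hp hswap => hp ?_)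
    (by simp) (by simp)
  · rw [Prod.fst_swap, Prod.snd_swap, h.symm p.2 p.1]
    exact CharTwo.add_self_eq_zero _
  · rw [show p.1 = p.2 from congrArg Prod.snd hswap, h.diag, Nat.cast_zero]

theorem IsRealization.sum_le_bound {a : Matrix (Fin n) (Fin n) ℕ} (h : IsRealization c d a)
    (S : Finset (Fin n)) : ∑ i ∈ S, d i ≤ bound c d S := by
  have inner : ∀ i ∈ S, ∑ j ∈ S, a i j ≤ c * (#S - 1) := fun i hi => by
    rw [← sum_erase S (h.diag i), ← card_erase_of_mem hi, mul_comm, ← smul_eq_mul]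
    exact sum_le_card_nsmul _ _ _ fun j _ => h.le i j
  have outer : ∀ j ∈ Sᶜ, ∑ i ∈ S, a i j ≤ min (d j) (c * #S) := fun j _ => by
    simp_rw [h.symm _ j]
    refine le_min ?_ ?_
    · rw [← h.sum_row j]
      exact sum_le_sum_of_subset (subset_univ S)
    · rw [mul_comm, ← smul_eq_mul]
      exact sum_le_card_nsmul _ _ _ fun i _ => h.le j i
  calc ∑ i ∈ S, d i = ∑ i ∈ S, (∑ j ∈ S, a i j + ∑ j ∈ Sᶜ, a i j) :=
        sum_congr rfl fun i _ => by rw [sum_add_sum_compl, h.sum_row]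
    _ = ∑ i ∈ S, ∑ j ∈ S, a i j + ∑ j ∈ Sᶜ, ∑ i ∈ S, a i j := by
        rw [sum_add_distrib]
        exact congrArg _ sum_comm
    _ ≤ ∑ _i ∈ S, c * (#S - 1) + ∑ j ∈ Sᶜ, min (d j) (c * #S) :=
        add_le_add (sum_le_sum inner) (sum_le_sum outer)
    _ = bound c d S := by rw [sum_const, smul_eq_mul, bound]; ring

theorem bound_filter_lt {k : ℕ} (hk : k ≤ n) :
    bound c d {i : Fin n | (i : ℕ) < k} =
      c * k * (k - 1) + ∑ j ∈ {j : Fin n | k ≤ (j : ℕ)}, min (d j) (c * k) := by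
  rw [bound, Fin.card_filter_val_lt, min_eq_right hk, compl_filter]
  simp only [not_lt]

theorem bound_singleton (v : Fin n) : bound c d {v} = ∑ j ∈ {v}ᶜ, min (d j) c := by
  simp [bound]

theorem bound_add_sum_of_card_eq {S T : Finset (Fin n)} (h : #T = #S) :
    bound c d T + ∑ i ∈ T, min (d i) (c * #S) =
      c * #S * (#S - 1) + ∑ i, min (d i) (c * #S) := by
  rw [bound, h, add_assoc, sum_compl_add_sum]

theorem condition_of_antitone (hd : Antitone d)
    (h : ∀ k, 1 ≤ k → k ≤ n →
      ∑ i ∈ {i : Fin n | (i : ℕ) < k}, d i ≤ bound c d {i : Fin n | (i : ℕ) < k}) :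
    Condition c d := by
  intro S
  obtain hS | hS := Nat.eq_zero_or_pos #S
  · simp [card_eq_zero.1 hS]
  set P : Finset (Fin n) := {i : Fin n | (i : ℕ) < #S}
  have hSn : #S ≤ n := (card_le_univ S).trans_eq (Fintype.card_fin n)
  have hP : #P = #S := by rw [Fin.card_filter_val_lt, min_eq_right hSn]
  have hPS : ∑ i ∈ P, d i ≤ bound c d P := h #S hS hSn
  have hmin : Antitone fun j => min (d j) (c * #S) := fun i j hij => min_le_min_right _ (hd hij)
  have hmono : ∑ i ∈ S, (d i + min (d i) (c * #S)) ≤ ∑ i ∈ P, (d i + min (d i) (c * #S)) :=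
    (hd.add hmin).sum_le_sum_filter_lt S
  rw [sum_add_distrib, sum_add_distrib] at hmono
  have := bound_add_sum_of_card_eq (c := c) (d := d) hP
  have := bound_add_sum_of_card_eq (c := c) (d := d) (rfl : #S = #S)
  omega

theorem bound_le_bound_of_subset {S T : Finset (Fin n)} (hST : S ⊆ T)
    (h : ∀ i ∈ T \ S, d i = 0) : bound c d S ≤ bound c d T := by
  have hzero : ∑ j ∈ Sᶜ \ Tᶜ, min (d j) (c * #S) = 0 := sum_eq_zero fun j hj => by
    rw [h j (by simpa [and_comm] using hj), Nat.zero_min]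
  have hcard : #S ≤ #T := card_le_card hST
  unfold bound
  rw [← sum_sdiff (compl_subset_compl.2 hST), hzero, zero_add]
  gcongr

theorem condition_of_forall_ne_zero
    (h : ∀ S : Finset (Fin n), (∀ i ∈ S, d i ≠ 0) → ∑ i ∈ S, d i ≤ bound c d S) :
    Condition c d := fun S =>
  calc ∑ i ∈ S, d i = ∑ i ∈ S with d i ≠ 0, d i := (sum_filter_ne_zero S).symm
    _ ≤ bound c d {i ∈ S | d i ≠ 0} := h _ fun i hi => (mem_filter.1 hi).2
    _ ≤ bound c d S := bound_le_bound_of_subset (filter_subset _ _) fun i hi => by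
        simp only [mem_sdiff, mem_filter, not_and, not_not] at hi
        exact hi.2 hi.1

def layOff (c : ℕ) (d : Fin n → ℕ) (v : Fin n) : Fin n → ℕ :=
  fun j => if j = v then 0 else d j - min (d j) c

theorem sum_layOff (hv : d v = ∑ j ∈ {v}ᶜ, min (d j) c) :
    ∑ i, layOff c d v i + 2 * d v = ∑ i, d i := by
  have h1 : ∑ i, layOff c d v i = ∑ j ∈ {v}ᶜ, (d j - min (d j) c) := by
    rw [← add_sum_erase _ _ (mem_univ v), compl_singleton, layOff, if_pos rfl, zero_add]
    exact sum_congr rfl fun j hj => if_neg (ne_of_mem_erase hj)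
  have h2 : ∑ j ∈ {v}ᶜ, (d j - min (d j) c) + ∑ j ∈ {v}ᶜ, min (d j) c = ∑ j ∈ {v}ᶜ, d j := by
    rw [← sum_add_distrib]
    exact sum_congr rfl fun j _ => Nat.sub_add_cancel (min_le_left _ _)
  have h3 := sum_add_sum_compl {v} d
  rw [sum_singleton] at h3
  omega

/-- By `condition_of_forall_ne_zero` only sets `S` avoiding `v` with `d i > c` on `S` matter;
for them the inequality comes from the one for `insert v S`. -/
theorem condition_layOff (hd : Condition c d) (hv : d v = ∑ j ∈ {v}ᶜ, min (d j) c) :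
    Condition c (layOff c d v) := by
  refine condition_of_forall_ne_zero fun S hS => ?_
  have hvS : v ∉ S := fun h => hS v h (if_pos rfl)
  have hrest : ∀ j ≠ v, layOff c d v j = d j - min (d j) c := fun j hj => if_neg hj
  have hbig : ∀ i ∈ S, d i = layOff c d v i + c := fun i hi => by
    have := hS i hi
    rw [hrest i (ne_of_mem_of_not_mem hi hvS)] at this ⊢
    omega
  have hins := hd (insert v S)
  rw [sum_insert hvS, bound, card_insert_of_notMem hvS, compl_insert, Nat.add_sub_cancel] at hins
  have hv' : d v = #S * c + ∑ j ∈ Sᶜ.erase v, min (d j) c := by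
    rw [hv, sum_compl_singleton_of_notMem hvS, ← smul_eq_mul, ← sum_const]
    congr 1
    exact sum_congr rfl fun i hi => by rw [hbig i hi]; omega
  have hSsum : ∑ i ∈ S, d i = ∑ i ∈ S, layOff c d v i + #S * c := by
    rw [sum_congr rfl hbig, sum_add_distrib, sum_const, smul_eq_mul]
  have hpt : ∑ j ∈ Sᶜ.erase v, min (d j) (c * (#S + 1)) ≤
      ∑ j ∈ Sᶜ.erase v, min (layOff c d v j) (c * #S) + ∑ j ∈ Sᶜ.erase v, min (d j) c := by
    rw [← sum_add_distrib]
    refine sum_le_sum fun j hj => ?_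
    rw [hrest j (ne_of_mem_erase hj), mul_add, mul_one]
    omega
  have hcompl : ∑ j ∈ Sᶜ, min (layOff c d v j) (c * #S) =
      ∑ j ∈ Sᶜ.erase v, min (layOff c d v j) (c * #S) := by
    rw [← add_sum_erase _ _ (mem_compl.2 hvS), layOff, if_pos rfl, Nat.zero_min, zero_add]
  have hK : c * (#S + 1) * #S = c * #S * (#S - 1) + 2 * (c * #S) := by
    generalize #S = K
    cases K with
    | zero => simp
    | succ K => rw [Nat.add_sub_cancel]; ring
  have hcomm : #S * c = c * #S := mul_comm _ _
  rw [bound, hcompl]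
  omega

theorem IsRealization.exists_of_layOff {a : Matrix (Fin n) (Fin n) ℕ}
    (ha : IsRealization c (layOff c d v) a) (hv : d v = ∑ j ∈ {v}ᶜ, min (d j) c) :
    ∃ a', IsRealization c d a' := by
  obtain ⟨w, hwv, hwj⟩ : ∃ w : Fin n → ℕ, w v = 0 ∧ ∀ j ≠ v, w j = min (d j) c :=
    ⟨fun j => if j = v then 0 else min (d j) c, if_pos rfl, fun j hj => if_neg hj⟩
  have hrow : ∀ j, a v j = 0 := fun j =>
    sum_eq_zero_iff.1 ((ha.sum_row v).trans (if_pos rfl)) j (mem_univ j)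
  have hw : ∑ j, w j = d v := by
    rw [hv, ← add_sum_erase _ _ (mem_univ v), compl_singleton, hwv, zero_add]
    exact sum_congr rfl fun j hj => hwj j (ne_of_mem_erase hj)
  refine ⟨fun p q => a p q + (if p = v then w q else 0) + (if q = v then w p else 0),
    ⟨fun p q => ?_, fun p q => ?_, fun p => ?_, fun p => ?_⟩⟩
  · by_cases hp : p = v <;> by_cases hq : q = v
    · simp [hp, hq, hwv, ha.diag]
    · simp [hp, hq, hrow, hwj q hq]
    · simp [hp, hq, ← ha.symm v p, hrow, hwj p hp]
    · simp [hp, hq, ha.le p q]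
  · simp only [ha.symm p q]
    ring
  · by_cases hp : p = v <;> simp [hp, hwv, ha.diag]
  · simp only [sum_add_distrib, ha.sum_row, sum_ite_irrel, sum_const_zero, hw, sum_ite_eq',
      mem_univ, if_true]
    by_cases hp : p = v
    · simp [hp, hwv, layOff]
    · simp only [hp, if_false, layOff, hwj p hp]
      omega

def transfer (d : Fin n → ℕ) (s v : Fin n) : Fin n → ℕ :=
  fun i => if i = v then d v + 1 else if i = s then d s - 1 else d i

theorem transfer_transfer (hsv : s ≠ v) (hs : 0 < d s) : transfer (transfer d s v) v s = d := by
  funext i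
  by_cases hv : i = v
  · subst hv
    simp [transfer, hsv.symm]
  · by_cases hs' : i = s
    · subst hs'
      simp only [transfer, if_true, if_neg hsv]
      omega
    · simp [transfer, hv, hs']

theorem sum_comp_transfer (f : ℕ → ℕ) (hsv : s ≠ v) (T : Finset (Fin n)) :
    ∑ i ∈ T, f (transfer d s v i) +
        ((if v ∈ T then f (d v) else 0) + (if s ∈ T then f (d s) else 0)) =
      ∑ i ∈ T, f (d i) +
        ((if v ∈ T then f (d v + 1) else 0) + (if s ∈ T then f (d s - 1) else 0)) := by
  have pointwise : ∀ i, f (transfer d s v i) +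
      ((if i = v then f (d v) else 0) + (if i = s then f (d s) else 0)) =
      f (d i) + ((if i = v then f (d v + 1) else 0) + (if i = s then f (d s - 1) else 0)) :=
    fun i => by
      by_cases hv : i = v
      · simp [transfer, hv, hsv.symm, add_comm]
      · by_cases hs : i = s <;> simp [transfer, hv, hs, hsv, add_comm]
  simpa only [sum_add_distrib, sum_ite_eq'] using sum_congr rfl fun i (_ : i ∈ T) => pointwise i

theorem sum_transfer (hsv : s ≠ v) (hs : 0 < d s) : ∑ i, transfer d s v i = ∑ i, d i := by
  have := sum_comp_transfer id hsv univ (d := d)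
  simp only [id, mem_univ, if_true] at this
  omega

theorem sum_sq_lt_sum_sq_transfer (hsv : s ≠ v) (hs : 0 < d s) (hle : d s ≤ d v) :
    ∑ i, d i ^ 2 < ∑ i, transfer d s v i ^ 2 := by
  have := sum_comp_transfer (· ^ 2) hsv univ (d := d)
  simp only [mem_univ, if_true] at this
  obtain ⟨t, ht⟩ := Nat.exists_eq_add_one.2 hs
  rw [ht, Nat.add_sub_cancel] at this
  nlinarith

theorem pos_of_lt_sum_min (hs : ∀ j ≠ v, d j ≤ d s)
    (hslack : d v < ∑ j ∈ {v}ᶜ, min (d j) c) : 0 < d s := by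
  by_contra! h0
  refine (Nat.not_lt_zero (d v)) (hslack.trans_eq (sum_eq_zero fun j hj => ?_))
  have := hs j (by simpa using hj)
  omega

theorem even_bound_add_sum (he : Even (∑ i, d i)) {S : Finset (Fin n)}
    (h : ∀ j ∉ S, d j ≤ c * #S) : Even (bound c d S + ∑ i ∈ S, d i) := by
  have hmin : ∑ j ∈ Sᶜ, min (d j) (c * #S) = ∑ j ∈ Sᶜ, d j :=
    sum_congr rfl fun j hj => min_eq_left (h j (mem_compl.1 hj))
  rw [bound, hmin, add_assoc, sum_compl_add_sum, mul_assoc]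
  exact ((Nat.even_mul_pred_self _).mul_left c).add he

theorem Condition.eq_of_bound_le_sum (hd : Condition c d) {S : Finset (Fin n)} {i : Fin n}
    (htight : bound c d S ≤ ∑ i ∈ S, d i) (hi : i ∈ S) (hs : s ∉ S) (hle : d i ≤ d s) :
    d i = d s := by
  set S' := insert s (S.erase i)
  have hs' : s ∉ S.erase i := fun h => hs (mem_of_mem_erase h)
  have hswap : ∀ f : Fin n → ℕ, ∑ j ∈ S', f j + f i = ∑ j ∈ S, f j + f s := fun f => by
    rw [sum_insert hs', ← add_sum_erase S f hi]
    ring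
  have hS' := hd S'
  have hcard : #S' = #S := by rw [card_insert_of_notMem hs', card_erase_add_one hi]
  have h1 := bound_add_sum_of_card_eq (c := c) (d := d) hcard
  have h2 := bound_add_sum_of_card_eq (c := c) (d := d) (rfl : #S = #S)
  have h3 := hswap d
  have h4 := hswap fun j => min (d j) (c * #S)
  have h5 : min (d i) (c * #S) ≤ min (d s) (c * #S) := min_le_min_right _ hle
  omega

/-- A set `S` with `v ∈ S`, `s ∉ S` cannot be tight: by `eq_of_bound_le_sum` every other member
of `S` would have degree `d s`, and counting then contradicts the slack at `v`. -/
theorem Condition.sum_lt_bound (hd : Condition c d) (hs : ∀ j ≠ v, d j ≤ d s)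
    (hslack : d v < ∑ j ∈ {v}ᶜ, min (d j) c) {S : Finset (Fin n)} (hvS : v ∈ S) (hsS : s ∉ S) :
    ∑ i ∈ S, d i < bound c d S := by
  by_contra! htight
  obtain ⟨m, hm⟩ := Nat.exists_eq_add_one.2 (card_pos.2 ⟨v, hvS⟩)
  have key : ∀ i ∈ S.erase v, d i = d s := fun i hi =>
    hd.eq_of_bound_le_sum htight (mem_of_mem_erase hi) hsS (hs i (ne_of_mem_erase hi))
  have hsum : ∑ i ∈ S, d i = d v + m * d s := by
    rw [← add_sum_erase S d hvS, sum_congr rfl key, sum_const, card_erase_of_mem hvS, hm,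
      smul_eq_mul, Nat.add_sub_cancel]
  have hsc : s ∈ Sᶜ := mem_compl.2 hsS
  have hslack' : d v + 1 ≤ (m + 1) * min (d s) c + ∑ j ∈ Sᶜ.erase s, min (d j) c := by
    rw [sum_compl_singleton_of_mem hvS, sum_congr rfl fun i hi => by rw [key i hi], sum_const,
      card_erase_of_mem hvS, hm, smul_eq_mul, Nat.add_sub_cancel, ← add_sum_erase _ _ hsc]
      at hslack
    linarith
  have htight' : c * (m + 1) * m + min (d s) (c * (m + 1)) +
      ∑ j ∈ Sᶜ.erase s, min (d j) (c * (m + 1)) ≤ d v + m * d s := by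
    rw [bound, hm, Nat.add_sub_cancel, ← add_sum_erase _ _ hsc, hsum] at htight
    linarith
  have hcap : ∑ j ∈ Sᶜ.erase s, min (d j) c ≤ ∑ j ∈ Sᶜ.erase s, min (d j) (c * (m + 1)) :=
    sum_le_sum fun j _ => min_le_min_left _ (Nat.le_mul_of_pos_right c m.succ_pos)
  have hmin := min_le_left (d s) c
  have hmin' := min_le_right (d s) c
  rcases le_or_gt (d s) (c * (m + 1)) with hsmall | hlarge
  · rw [min_eq_left hsmall] at htight'
    rcases m with _ | m
    · linarith
    · nlinarith
  · have hins := hd (insert s S)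
    rw [sum_insert hsS, bound, card_insert_of_notMem hsS, hm, compl_insert, hsum,
      Nat.add_sub_cancel] at hins
    have hpt := sum_le_sum fun j (_ : j ∈ Sᶜ.erase s) => mul_min_add_min_le (d j) c m
    rw [sum_add_distrib, ← mul_sum, ← mul_sum] at hpt
    rw [min_eq_right hlarge.le] at htight'
    rw [min_eq_right ((Nat.le_mul_of_pos_right c m.succ_pos).trans hlarge.le)] at hslack'
    nlinarith

theorem sum_lt_bound_of_notMem (hs : ∀ j ≠ v, d j ≤ d s) (hc : 0 < c) (hsv : s ≠ v)
    {S : Finset (Fin n)} (hne : S.Nonempty) (hvS : v ∉ S) (hsS : s ∉ S)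
    (hv : c * #S ≤ d v) (hsc : d s ≤ c * #S) : ∑ i ∈ S, d i < bound c d S := by
  obtain ⟨m, hm⟩ := Nat.exists_eq_add_one.2 (card_pos.2 hne)
  have hSle : ∑ i ∈ S, d i ≤ #S * d s := by
    rw [← smul_eq_mul]
    exact sum_le_card_nsmul _ _ _ fun i hi => hs i (ne_of_mem_of_not_mem hi hvS)
  have hpair : min (d v) (c * #S) + min (d s) (c * #S) ≤ ∑ j ∈ Sᶜ, min (d j) (c * #S) := by
    rw [← sum_pair (f := fun j => min (d j) (c * #S)) hsv.symm]
    exact sum_le_sum_of_subset (by simp [insert_subset_iff, hvS, hsS])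
  rw [min_eq_right hv, min_eq_left hsc] at hpair
  rw [bound, hm, Nat.add_sub_cancel]
  rw [hm] at hSle hpair hsc
  nlinarith [Nat.mul_le_mul_left m hsc, Nat.mul_pos hc m.succ_pos]

theorem condition_transfer (hd : Condition c d) (he : Even (∑ i, d i)) (hsv : s ≠ v)
    (hs : ∀ j ≠ v, d j ≤ d s) (hslack : d v < ∑ j ∈ {v}ᶜ, min (d j) c) :
    Condition c (transfer d s v) := by
  intro S
  obtain rfl | hne := S.eq_empty_or_nonempty
  · simp
  have hs0 := pos_of_lt_sum_min hs hslack
  have hsum := sum_comp_transfer id hsv S (d := d)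
  have hcompl := sum_comp_transfer (min · (c * #S)) hsv Sᶜ (d := d)
  have hdS := hd S
  unfold bound at hdS ⊢
  by_cases hsS : s ∈ S
  · by_cases hvS : v ∈ S <;>
      simp only [id, hvS, hsS, mem_compl, not_true_eq_false, not_false_eq_true, if_true,
        if_false] at hsum hcompl <;>
      omega
  by_cases hvS : v ∈ S
  · simp only [id, hvS, hsS, mem_compl, not_true_eq_false, not_false_eq_true, if_true, if_false]
      at hsum hcompl
    have hlt := hd.sum_lt_bound hs hslack hvS hsS
    unfold bound at hlt
    by_cases hsmall : d s ≤ c * #S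
    · -- here the bound drops by one, but both sides have the same parity
      obtain ⟨t, ht⟩ := even_bound_add_sum he fun j hj =>
        (hs j fun h => hj (h ▸ hvS)).trans hsmall
      unfold bound at ht
      omega
    · omega
  · simp only [id, hvS, hsS, mem_compl, not_false_eq_true, if_true, if_false] at hsum hcompl
    by_cases hcase : c * #S ≤ d v ∧ d s ≤ c * #S
    · have hc : 0 < c := Nat.pos_of_ne_zero fun hc => by simp [hc] at hslack
      have hlt := sum_lt_bound_of_notMem hs hc hsv hne hvS hsS hcase.1 hcase.2
      unfold bound at hlt
      omega
    · omega

def edge (x y : Fin n) : Matrix (Fin n) (Fin n) ℕ :=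
  fun p q => (if p = x ∧ q = y then 1 else 0) + (if p = y ∧ q = x then 1 else 0)

theorem edge_comm (x y p q : Fin n) : edge x y q p = edge x y p q := by
  simp only [edge, and_comm, add_comm]

theorem edge_self {x y : Fin n} (hxy : x ≠ y) (p : Fin n) : edge x y p p = 0 := by
  have : ¬(p = x ∧ p = y) := fun h => hxy (h.1.symm.trans h.2)
  simp [edge, this, and_comm (a := p = y)]

theorem edge_eq_zero {x y p q : Fin n} (h : ¬((p = x ∧ q = y) ∨ (p = y ∧ q = x))) :
    edge x y p q = 0 := by
  simp only [not_or] at h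
  simp [edge, h.1, h.2]

theorem edge_le_one {x y : Fin n} (hxy : x ≠ y) (p q : Fin n) : edge x y p q ≤ 1 := by
  unfold edge
  grind

theorem sum_edge (x y p : Fin n) :
    ∑ q, edge x y p q = (if p = x then 1 else 0) + (if p = y then 1 else 0) := by
  simp [edge, sum_add_distrib, ite_and]

theorem IsRealization.exists_lt_of_lt {a : Matrix (Fin n) (Fin n) ℕ} (ha : IsRealization c d a)
    (h : d s < d v) : ∃ u, u ≠ v ∧ u ≠ s ∧ a s u < a v u := by
  by_contra! hle
  refine h.not_ge ?_
  rw [← ha.sum_row, ← ha.sum_row, ← Equiv.sum_comp (Equiv.swap v s) (a v)]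
  refine sum_le_sum fun j _ => ?_
  by_cases hjv : j = v
  · rw [hjv, Equiv.swap_apply_left, ha.symm]
  by_cases hjs : j = s
  · rw [hjs, Equiv.swap_apply_right, ha.diag]
    exact Nat.zero_le _
  rw [Equiv.swap_apply_of_ne_of_ne hjv hjs]
  exact hle j hjv hjs

theorem IsRealization.edge_le {a : Matrix (Fin n) (Fin n) ℕ} {u : Fin n}
    (ha : IsRealization c d a) (huv : u ≠ v) (hpos : 0 < a v u) (p q : Fin n) :
    edge v u p q ≤ a p q := by
  by_cases hpq : (p = v ∧ q = u) ∨ (p = u ∧ q = v)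
  · rcases hpq with ⟨rfl, rfl⟩ | ⟨rfl, rfl⟩
    · simpa [edge, huv, Ne.symm huv] using hpos.nat_succ_le
    · simpa [edge, huv, Ne.symm huv, ha.symm p q] using hpos.nat_succ_le
  · rw [edge_eq_zero hpq]
    exact Nat.zero_le _

theorem IsRealization.transfer_edge {a : Matrix (Fin n) (Fin n) ℕ} {u : Fin n}
    (ha : IsRealization c d a) (hsv : s ≠ v) (huv : u ≠ v) (hus : u ≠ s) (hlt : a s u < a v u) :
    IsRealization c (transfer d v s) (a + edge s u - edge v u) := by
  have hcover : ∀ p q, edge v u p q ≤ a p q + edge s u p q := fun p q =>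
    (ha.edge_le huv (Nat.zero_lt_of_lt hlt) p q).trans (Nat.le_add_right _ _)
  refine ⟨fun p q => ?_, fun p q => ?_, fun p => ?_, fun p => ?_⟩
  · simp only [Matrix.sub_apply, Matrix.add_apply]
    by_cases hpq : (p = s ∧ q = u) ∨ (p = u ∧ q = s)
    · have hsu : a p q = a s u := by
        rcases hpq with ⟨rfl, rfl⟩ | ⟨rfl, rfl⟩
        · rfl
        · exact ha.symm _ _
      have := edge_le_one (Ne.symm hus) p q
      have := ha.le v u
      omega
    · rw [edge_eq_zero hpq, add_zero]
      exact (Nat.sub_le _ _).trans (ha.le p q)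
  · simp only [Matrix.sub_apply, Matrix.add_apply, ha.symm p q, edge_comm _ _ p q]
  · simp only [Matrix.sub_apply, Matrix.add_apply, ha.diag, edge_self (Ne.symm hus),
      edge_self (Ne.symm huv)]
  · have hsum : ∑ q, (a + edge s u - edge v u) p q + ∑ q, edge v u p q =
        ∑ q, a p q + ∑ q, edge s u p q := by
      rw [← sum_add_distrib, ← sum_add_distrib]
      exact sum_congr rfl fun q _ => Nat.sub_add_cancel (hcover p q)
    rw [sum_edge, sum_edge, ha.sum_row] at hsum
    by_cases hps : p = s
    · subst hps
      simp only [transfer, if_true, if_neg hsv, if_neg (Ne.symm hus)] at hsum ⊢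
      omega
    · by_cases hpv : p = v
      · subst hpv
        simp only [transfer, if_true, if_neg hps, if_neg (Ne.symm huv)] at hsum ⊢
        omega
      · simp only [transfer, if_neg hpv, if_neg hps] at hsum ⊢
        omega

theorem IsRealization.exists_of_transfer {a : Matrix (Fin n) (Fin n) ℕ}
    (ha : IsRealization c (transfer d s v) a) (hsv : s ≠ v) (hs : 0 < d s) (hle : d s ≤ d v) :
    ∃ a', IsRealization c d a' := by
  have hlt : transfer d s v s < transfer d s v v := by
    simp only [transfer, if_true, if_neg hsv]
    omega
  obtain ⟨u, huv, hus, hu⟩ := ha.exists_lt_of_lt hlt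
  exact ⟨_, transfer_transfer hsv hs ▸ ha.transfer_edge hsv huv hus hu⟩

theorem Condition.exists_isRealization {d : Fin n → ℕ} (hd : Condition c d)
    (he : Even (∑ i, d i)) : ∃ a, IsRealization c d a := by
  by_cases h0 : ∀ i, d i = 0
  · exact ⟨0, fun _ _ => Nat.zero_le c, fun _ _ => rfl, fun _ => rfl, fun i => by simp [h0 i]⟩
  obtain ⟨i, hi⟩ := not_forall.1 h0
  have : Nonempty (Fin n) := ⟨i⟩
  obtain ⟨v, hv⟩ := Finite.exists_max d
  have hv0 : 0 < d v := (Nat.pos_of_ne_zero hi).trans_le (hv i)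
  have hdv : d v ≤ ∑ j ∈ {v}ᶜ, min (d j) c := by simpa [bound_singleton] using hd {v}
  rcases hdv.eq_or_lt with htight | hslack
  · have hsum := sum_layOff htight
    obtain ⟨a, ha⟩ := Condition.exists_isRealization (condition_layOff hd htight)
      ((Nat.even_add.1 (hsum ▸ he)).2 (even_two_mul _))
    exact ha.exists_of_layOff htight
  · obtain ⟨s, hs, hsmax⟩ := exists_max_image ({v}ᶜ : Finset (Fin n)) d
      (nonempty_of_sum_ne_zero (hv0.trans hslack).ne')
    have hsv : s ≠ v := by simpa using hs
    have hsmax' : ∀ j ≠ v, d j ≤ d s := fun j hj => hsmax j (by simpa using hj)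
    have hs0 := pos_of_lt_sum_min hsmax' hslack
    obtain ⟨a, ha⟩ := Condition.exists_isRealization
      (condition_transfer hd he hsv hsmax' hslack) (by rwa [sum_transfer hsv hs0])
    exact ha.exists_of_transfer hsv hs0 (hv s)
termination_by (∑ i, d i, (∑ i, d i) ^ 2 - ∑ i, d i ^ 2)
decreasing_by
  · exact Prod.Lex.left _ _ (by omega)
  · rw [sum_transfer hsv hs0]
    refine Prod.Lex.right _ ?_
    have := sum_sq_lt_sum_sq_transfer hsv hs0 (hv s)
    have := sum_sq_le_sq_sum_of_nonneg (s := univ) (f := transfer d s v) fun _ _ => Nat.zero_le _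
    rw [sum_transfer hsv hs0] at this
    omega

end ErdosGallai

open ErdosGallai

theorem finite_discrete_graphical_iff_general (n r : ℕ) (d : Fin n → ℕ)
    (hmono : ∀ i j : Fin n, i ≤ j → d j ≤ d i) :
    (∃ a : Matrix (Fin n) (Fin n) ℕ, (∀ i j, a i j ≤ r - 1) ∧ (∀ i j, a i j = a j i) ∧
      (∀ i, a i i = 0) ∧ ∀ i, d i = ∑ j ∈ Finset.univ.erase i, a i j) ↔
    (Even (∑ i, d i) ∧ ∀ k : ℕ, 1 ≤ k → k ≤ n →
      ∑ i ∈ Finset.univ.filter (fun i : Fin n => (i : ℕ) < k), d i ≤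
        (r - 1) * k * (k - 1) +
          ∑ j ∈ Finset.univ.filter (fun j : Fin n => k ≤ (j : ℕ)),
            min (d j) ((r - 1) * k)) := by
  constructor
  · rintro ⟨a, hle, hsymm, hdiag, hdeg⟩
    have ha : IsRealization (r - 1) d a :=
      ⟨hle, hsymm, hdiag, fun i => by rw [hdeg i, sum_erase _ (hdiag i)]⟩
    exact ⟨ha.even_sum, fun k _ hk => bound_filter_lt hk ▸ ha.sum_le_bound _⟩
  · rintro ⟨he, hprefix⟩
    have hd : Condition (r - 1) d :=
      condition_of_antitone hmono fun k hk₁ hk => (bound_filter_lt hk).symm ▸ hprefix k hk₁ hk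
    obtain ⟨a, ha⟩ := hd.exists_isRealization he
    exact ⟨a, ha.le, ha.symm, ha.diag, fun i => by rw [← ha.sum_row i, sum_erase _ (ha.diag i)]⟩

theorem finite_discrete_graphical_iff (n r : ℕ) (hr : 2 ≤ r) (d : Fin n → ℕ)
    (hmono : ∀ i j : Fin n, i ≤ j → d j ≤ d i) :
    (∃ a : Matrix (Fin n) (Fin n) ℕ, (∀ i j, a i j ≤ r - 1) ∧ (∀ i j, a i j = a j i) ∧
      (∀ i, a i i = 0) ∧ ∀ i, d i = ∑ j ∈ Finset.univ.erase i, a i j) ↔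
    (Even (∑ i, d i) ∧ ∀ k : ℕ, 1 ≤ k → k ≤ n →
      ∑ i ∈ Finset.univ.filter (fun i : Fin n => (i : ℕ) < k), d i ≤
        (r - 1) * k * (k - 1) +
          ∑ j ∈ Finset.univ.filter (fun j : Fin n => k ≤ (j : ℕ)),
            min (d j) ((r - 1) * k)) :=
  finite_discrete_graphical_iff_general n r d hmono
end

section
/- The closure of the convex hull of the set W = {d ∈ ℕ₀^n : ∑_i d_i is even and max_i d_i ≤ (1/2)∑_i d_i} equals W₁ = {d ∈ [0,∞)^n : max_i d_i ≤ (1/2)∑_i d_i}. -/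
theorem closure_convexHull_discrete_graphical (n : ℕ) :
    closure (convexHull ℝ {d : Fin n → ℝ | ∃ m : Fin n → ℕ,
        (∀ i, d i = m i) ∧ Even (∑ i, m i) ∧ ∀ i, 2 * m i ≤ ∑ j, m j}) =
      {d : Fin n → ℝ | (∀ i, 0 ≤ d i) ∧ ∀ i, d i ≤ (1 / 2) * ∑ j, d j} := by
  set W : Set (Fin n → ℝ) := {d : Fin n → ℝ | ∃ m : Fin n → ℕ,
      (∀ i, d i = m i) ∧ Even (∑ i, m i) ∧ ∀ i, 2 * m i ≤ ∑ j, m j} with hWdef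
  have hzero : (0 : Fin n → ℝ) ∈ W := ⟨0, by simp⟩
  apply subset_antisymm
  · have hclosed : IsClosed {d : Fin n → ℝ | (∀ i, 0 ≤ d i) ∧ ∀ i, d i ≤ (1/2) * ∑ j, d j} := by
      have heq : {d : Fin n → ℝ | (∀ i, 0 ≤ d i) ∧ ∀ i, d i ≤ (1/2) * ∑ j, d j}
          = ⋂ i, {d : Fin n → ℝ | 0 ≤ d i ∧ d i ≤ (1/2) * ∑ j, d j} := by
        ext d; simp [Set.mem_iInter, forall_and]
      rw [heq]
      refine isClosed_iInter fun i => IsClosed.inter ?_ ?_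
      · exact isClosed_le continuous_const (continuous_apply i)
      · exact isClosed_le (continuous_apply i)
          (Continuous.mul continuous_const (continuous_finset_sum _ fun j _ => continuous_apply j))
    have hconv : Convex ℝ {d : Fin n → ℝ | (∀ i, 0 ≤ d i) ∧ ∀ i, d i ≤ (1/2) * ∑ j, d j} := by
      intro x hx y hy a b ha hb hab
      constructor
      · intro i
        have h1 : (a • x + b • y) i = a * x i + b * y i := by simp [smul_eq_mul]
        rw [h1]
        have := mul_nonneg ha (hx.1 i); have := mul_nonneg hb (hy.1 i); linarith
      · intro i
        have h1 : (a • x + b • y) i = a * x i + b * y i := by simp [smul_eq_mul]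
        have h2 : ∑ j, (a • x + b • y) j = a * ∑ j, x j + b * ∑ j, y j := by
          simp [smul_eq_mul, Finset.sum_add_distrib, Finset.mul_sum]
        rw [h1, h2]
        have hx2 := mul_le_mul_of_nonneg_left (hx.2 i) ha
        have hy2 := mul_le_mul_of_nonneg_left (hy.2 i) hb
        linarith
    have hsub : W ⊆ {d : Fin n → ℝ | (∀ i, 0 ≤ d i) ∧ ∀ i, d i ≤ (1/2) * ∑ j, d j} := by
      rintro d ⟨m, hdm, -, hmax⟩
      constructor
      · intro i; rw [hdm i]; positivity
      · intro i
        have hs : ∑ j, d j = ((∑ j, m j : ℕ) : ℝ) := by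
          rw [Nat.cast_sum]; exact Finset.sum_congr rfl fun j _ => hdm j
        have hcast : ((2 * m i : ℕ) : ℝ) ≤ ((∑ j, m j : ℕ) : ℝ) := Nat.cast_le.mpr (hmax i)
        rw [hdm i, hs]; push_cast at hcast ⊢; linarith
    exact closure_minimal (convexHull_min hsub hconv) hclosed
  · rintro d ⟨hd1, hd2⟩
    by_cases hd0 : d = 0
    · rw [hd0]
      exact subset_closure (subset_convexHull ℝ W hzero)
    rw [Metric.mem_closure_iff]
    intro ε hε
    obtain ⟨N, hN⟩ := exists_nat_gt ((n + 1) / ε)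
    have hNpos : (0 : ℝ) < N := lt_of_le_of_lt (by positivity) hN
    have hNpos' : 0 < N := by exact_mod_cast hNpos
    set b : Fin n → ℕ := fun i => ⌊(N : ℝ) * d i⌋₊ with hb
    set m : Fin n → ℕ := fun i => 2 * (b i + n) with hm
    have hfl : ∀ i, (b i : ℝ) ≤ N * d i := fun i =>
      Nat.floor_le (mul_nonneg hNpos.le (hd1 i))
    have hfu : ∀ i, (N : ℝ) * d i < b i + 1 := fun i => Nat.lt_floor_add_one _
    have hkey : ∀ i, 2 * b i < ∑ j, b j + n := by
      intro i
      have hr : ((2 * b i : ℕ) : ℝ) < ((∑ j, b j + n : ℕ) : ℝ) := by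
        have h2 : (2 : ℝ) * (N * d i) ≤ N * ∑ j, d j := by
          have hdi : 2 * d i ≤ ∑ j, d j := by have := hd2 i; linarith
          nlinarith [hNpos.le]
        have h3 : (N : ℝ) * ∑ j, d j = ∑ j, (N : ℝ) * d j := Finset.mul_sum _ _ _
        have h4 : ∑ j, (N : ℝ) * d j < ∑ j, ((b j : ℝ) + 1) :=
          Finset.sum_lt_sum_of_nonempty ⟨i, Finset.mem_univ i⟩ (fun j _ => hfu j)
        have h5 : ∑ j, ((b j : ℝ) + 1) = ∑ j, (b j : ℝ) + n := by
          rw [Finset.sum_add_distrib]; simp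
        have h1 : (2 : ℝ) * (b i) ≤ 2 * (N * d i) := by have := hfl i; linarith
        push_cast
        calc (2 : ℝ) * b i ≤ 2 * (N * d i) := h1
          _ ≤ N * ∑ j, d j := h2
          _ = ∑ j, (N : ℝ) * d j := h3
          _ < ∑ j, ((b j : ℝ) + 1) := h4
          _ = ∑ j, (b j : ℝ) + n := h5
      exact_mod_cast hr
    have hsm : ∑ j, m j = 2 * (∑ j, b j) + 2 * (n * n) := by
      rw [hm]
      rw [show (fun i => 2 * (b i + n)) = fun i => 2 * b i + 2 * n from funext fun i => by ring]
      rw [Finset.sum_add_distrib, Finset.sum_const, ← Finset.mul_sum]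
      simp [Finset.card_univ]
      ring
    have hcon : ∀ i, 2 * m i ≤ ∑ j, m j := by
      intro i
      rw [hsm, hm]
      rcases Nat.lt_or_ge n 3 with hn | hn
      · have hn1 : 1 ≤ n := Nat.pos_of_ne_zero fun h => (h ▸ i).elim0
        interval_cases n
        · exfalso
          apply hd0
          have hs1 : ∑ j, d j = d 0 := by simp
          have h0 := hd2 0
          rw [hs1] at h0
          have hd00 : d 0 = 0 := le_antisymm (by linarith) (hd1 0)
          funext j
          rw [Subsingleton.elim j 0, hd00]; rfl
        · have hde : d 0 = d 1 := by
            have h0 := hd2 0; have h1 := hd2 1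
            rw [Fin.sum_univ_two] at h0 h1
            linarith
          have hbe : b 0 = b 1 := by rw [hb]; simp only [hde]
          have hs2 : ∑ j, b j = b 0 + b 1 := Fin.sum_univ_two b
          rw [hs2]
          fin_cases i <;> simp_all <;> omega
      · have h9 : 3 * n ≤ n * n := Nat.mul_le_mul_right n hn
        have hk := hkey i
        nlinarith [hk, h9]
    have heven : Even (∑ j, m j) := by
      rw [hsm]; exact ⟨∑ j, b j + n * n, by ring⟩
    set v : Fin n → ℝ := fun i => (m i : ℝ) with hv
    have hvW : v ∈ W := ⟨m, fun i => rfl, heven, hcon⟩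
    set t : ℝ := 1 / (2 * N) with ht
    have htpos : 0 ≤ t := by positivity
    have ht1 : t ≤ 1 := by
      rw [ht, div_le_one (by positivity)]
      have : (1 : ℝ) ≤ N := by exact_mod_cast hNpos'
      linarith
    have hxh : t • v ∈ convexHull ℝ W := by
      have hcomb := (convex_convexHull ℝ W) (subset_convexHull ℝ W hvW)
        (subset_convexHull ℝ W hzero) htpos (by linarith : (0:ℝ) ≤ 1 - t) (by ring)
      simpa using hcomb
    refine ⟨t • v, hxh, ?_⟩
    have hcoord : ∀ i, dist (d i) ((t • v) i) ≤ (n + 1) / N := by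
      intro i
      have hvi : (t • v) i = ((b i : ℝ) + n) / N := by
        rw [ht, hv]
        simp only [Pi.smul_apply, smul_eq_mul, hm]
        push_cast
        field_simp
      have habs : |(N : ℝ) * d i - ((b i : ℝ) + n)| ≤ n + 1 := by
        have h1 := hfl i
        have h2 := hfu i
        have h3 : (0 : ℝ) ≤ n := Nat.cast_nonneg n
        rw [abs_le]; constructor <;> linarith
      have heqd : d i - ((b i : ℝ) + n) / N = ((N : ℝ) * d i - ((b i : ℝ) + n)) / N := by
        field_simp
      rw [Real.dist_eq, hvi, heqd, abs_div, abs_of_pos hNpos]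
      exact (div_le_div_iff_of_pos_right hNpos).mpr habs
    have hdist : dist d (t • v) ≤ (n + 1) / N := by
      rw [dist_pi_le_iff (by positivity)]
      exact hcoord
    have hlt : ((n : ℝ) + 1) / N < ε := by
      rw [div_lt_iff₀ hNpos]
      rw [div_lt_iff₀ hε] at hN
      linarith
    exact lt_of_le_of_lt hdist hlt
end

section
/- Fix r ≥ 2 and define μ(t) = (∑_{a=0}^{r-1} a·e^{-at}) / (∑_{a=0}^{r-1} e^{-at}). Then for all t ∈ ℝ, μ'(t)/μ(t) ≥ -(r-1) + 1/(∑_{a=0}^{r-1} e^{at}), and in particular μ'(t)/μ(t) > -(r-1). -/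
open Finset

noncomputable def meanFun (r : ℕ) (t : ℝ) : ℝ :=
  (∑ a ∈ Finset.range r, (a : ℝ) * Real.exp (-(a : ℝ) * t)) /
    (∑ a ∈ Finset.range r, Real.exp (-(a : ℝ) * t))

/-! With `Mₖ(t) = ∑ₐ aᵏ e^{-at}` we have `μ = M₁ / M₀` and `Mₖ' = -Mₖ₊₁`, so
`μ'/μ = μ - M₂ / M₁`. Since `a ≤ r - 1` on the support, `M₂ ≤ (r - 1) M₁`. Reflecting
`a ↦ r - 1 - a` gives `∑ₐ e^{at} = e^{(r-1)t} M₀`, and the top term of `M₁` alone gives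
`M₁ ≥ e^{-(r-1)t}`, so `μ ≥ 1 / ∑ₐ e^{at}`. -/

noncomputable def expMoment (r k : ℕ) (t : ℝ) : ℝ :=
  ∑ a ∈ range r, (a : ℝ) ^ k * Real.exp (-(a : ℝ) * t)

theorem meanFun_eq_expMoment_div (r : ℕ) :
    meanFun r = fun t => expMoment r 1 t / expMoment r 0 t := by
  funext t
  simp only [meanFun, expMoment, pow_one, pow_zero, one_mul]

namespace expMoment

theorem hasDerivAt (r k : ℕ) (t : ℝ) :
    HasDerivAt (expMoment r k) (-expMoment r (k + 1) t) t := by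
  have h : HasDerivAt (expMoment r k)
      (∑ a ∈ range r, (a : ℝ) ^ k * (Real.exp (-(a : ℝ) * t) * (-(a : ℝ) * 1))) t := by
    unfold expMoment
    exact HasDerivAt.fun_sum fun a _ =>
      (((hasDerivAt_id t).const_mul (-(a : ℝ))).exp).const_mul _
  convert h using 1
  rw [expMoment, ← sum_neg_distrib]
  exact sum_congr rfl fun a _ => by ring

theorem single_le {r a : ℕ} (ha : a ∈ range r) (k : ℕ) (t : ℝ) :
    (a : ℝ) ^ k * Real.exp (-(a : ℝ) * t) ≤ expMoment r k t :=
  single_le_sum (f := fun a : ℕ => (a : ℝ) ^ k * Real.exp (-(a : ℝ) * t))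
    (fun _ _ => by positivity) ha

theorem pos {r : ℕ} (hr : 2 ≤ r) (k : ℕ) (t : ℝ) : 0 < expMoment r k t :=
  calc (0 : ℝ) < ((1 : ℕ) : ℝ) ^ k * Real.exp (-((1 : ℕ) : ℝ) * t) := by positivity
    _ ≤ expMoment r k t := single_le (mem_range.mpr (by omega)) k t

theorem succ_le (r k : ℕ) (t : ℝ) :
    expMoment r (k + 1) t ≤ ((r : ℝ) - 1) * expMoment r k t := by
  rw [expMoment, expMoment, mul_sum]
  refine sum_le_sum fun a ha => ?_
  have ha' : (a : ℝ) ≤ (r : ℝ) - 1 := by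
    have : (a : ℝ) + 1 ≤ r := by exact_mod_cast mem_range.mp ha
    linarith
  have hw : 0 ≤ (a : ℝ) ^ k * Real.exp (-(a : ℝ) * t) := by positivity
  calc (a : ℝ) ^ (k + 1) * Real.exp (-(a : ℝ) * t)
      = (a : ℝ) * ((a : ℝ) ^ k * Real.exp (-(a : ℝ) * t)) := by ring
    _ ≤ ((r : ℝ) - 1) * ((a : ℝ) ^ k * Real.exp (-(a : ℝ) * t)) :=
        mul_le_mul_of_nonneg_right ha' hw

theorem sum_exp_eq (r : ℕ) (t : ℝ) :
    ∑ a ∈ range r, Real.exp ((a : ℝ) * t) =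
      Real.exp (((r : ℝ) - 1) * t) * expMoment r 0 t := by
  rw [← sum_range_reflect, expMoment, mul_sum]
  refine sum_congr rfl fun a ha => ?_
  have hcast : ((r - 1 - a : ℕ) : ℝ) = (r : ℝ) - 1 - a := by
    have := mem_range.mp ha
    rw [Nat.cast_sub (by omega), Nat.cast_sub (by omega), Nat.cast_one]
  rw [hcast, pow_zero, one_mul, ← Real.exp_add]
  ring_nf

end expMoment

theorem logDeriv_meanFun {r : ℕ} (hr : 2 ≤ r) (t : ℝ) :
    logDeriv (meanFun r) t = meanFun r t - expMoment r 2 t / expMoment r 1 t := by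
  have h0 := (expMoment.pos hr 0 t).ne'
  have h1 := (expMoment.pos hr 1 t).ne'
  have hderiv := (expMoment.hasDerivAt r 1 t).fun_div (expMoment.hasDerivAt r 0 t) h0
  rw [logDeriv_apply, meanFun_eq_expMoment_div, hderiv.deriv]
  beta_reduce
  field_simp
  ring

theorem one_div_sum_exp_le_meanFun {r : ℕ} (hr : 2 ≤ r) (t : ℝ) :
    1 / ∑ a ∈ range r, Real.exp ((a : ℝ) * t) ≤ meanFun r t := by
  have htop : Real.exp (-((r : ℝ) - 1) * t) ≤ expMoment r 1 t := by
    have h := expMoment.single_le (mem_range.mpr (by omega : r - 1 < r)) 1 t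
    rw [Nat.cast_sub (by omega), Nat.cast_one, pow_one] at h
    have hr' : (1 : ℝ) ≤ (r : ℝ) - 1 := by
      have : (2 : ℝ) ≤ r := by exact_mod_cast hr
      linarith
    exact (le_mul_of_one_le_left (Real.exp_pos _).le hr').trans h
  rw [expMoment.sum_exp_eq, meanFun_eq_expMoment_div, one_div, mul_inv, ← Real.exp_neg,
    ← neg_mul, ← div_eq_mul_inv]
  exact div_le_div_of_nonneg_right htop (expMoment.pos hr 0 t).le

theorem meanFun_logderiv_lower_bound (r : ℕ) (hr : 2 ≤ r) (t : ℝ) :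
    -((r : ℝ) - 1) + 1 / (∑ a ∈ Finset.range r, Real.exp ((a : ℝ) * t)) ≤
        deriv (meanFun r) t / meanFun r t ∧
      -((r : ℝ) - 1) < deriv (meanFun r) t / meanFun r t := by
  rw [← logDeriv_apply, logDeriv_meanFun hr]
  have hmoment : expMoment r 2 t / expMoment r 1 t ≤ (r : ℝ) - 1 :=
    (div_le_iff₀ (expMoment.pos hr 1 t)).mpr (expMoment.succ_le r 1 t)
  have hmean := one_div_sum_exp_le_meanFun hr t
  have hsum : 0 < 1 / ∑ a ∈ range r, Real.exp ((a : ℝ) * t) :=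
    one_div_pos.mpr (expMoment.sum_exp_eq r t ▸ mul_pos (Real.exp_pos _) (expMoment.pos hr 0 t))
  constructor <;> linarith
end

section
/- Let μ: D → ℝ be strictly decreasing on a set D ⊆ ℝ, and let θ ∈ ℝ^n with θ_i + θ_j ∈ D for all i ≠ j. Define d_i = ∑_{j≠i} μ(θ_i + θ_j). Then for all i ≠ j, sign(d_i - d_j) = sign(θ_j - θ_i). -/
open Finset

theorem sign_deg_eq_sign_neg_param (n : ℕ) (hn : 3 ≤ n) (D : Set ℝ) (μ : ℝ → ℝ)
    (hμ : StrictAntiOn μ D) (θ : Fin n → ℝ) (hθ : ∀ i j : Fin n, i ≠ j → θ i + θ j ∈ D)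
    (d : Fin n → ℝ) (hd : ∀ i, d i = ∑ j ∈ Finset.univ.erase i, μ (θ i + θ j)) :
    ∀ i j : Fin n, i ≠ j → Real.sign (d i - d j) = Real.sign (θ j - θ i) := by
  -- difference formula
  have diff : ∀ i j : Fin n, i ≠ j →
      d i - d j = ∑ k ∈ (Finset.univ.erase i).erase j,
        (μ (θ i + θ k) - μ (θ j + θ k)) := by
    intro i j hij
    have hji : j ∈ Finset.univ.erase i := by simp [hij.symm]
    have hijm : i ∈ Finset.univ.erase j := by simp [hij]
    have h1 : μ (θ i + θ j) + ∑ k ∈ (Finset.univ.erase i).erase j, μ (θ i + θ k)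
        = ∑ k ∈ Finset.univ.erase i, μ (θ i + θ k) :=
      Finset.add_sum_erase _ (fun k => μ (θ i + θ k)) hji
    have h2 : μ (θ j + θ i) + ∑ k ∈ (Finset.univ.erase j).erase i, μ (θ j + θ k)
        = ∑ k ∈ Finset.univ.erase j, μ (θ j + θ k) :=
      Finset.add_sum_erase _ (fun k => μ (θ j + θ k)) hijm
    rw [Finset.erase_right_comm] at h2
    rw [hd i, hd j, ← h1, ← h2, add_comm (θ j) (θ i), Finset.sum_sub_distrib]
    ring
  have hne : ∀ i j : Fin n, ((Finset.univ.erase i).erase j : Finset (Fin n)).Nonempty := by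
    intro i j
    rw [← Finset.card_pos]
    have h1 : ((Finset.univ.erase i).erase j).card
        = if j ∈ Finset.univ.erase i then (Finset.univ.erase i).card - 1
          else (Finset.univ.erase i).card := by
      split <;> rename_i h
      · exact Finset.card_erase_of_mem h
      · exact Finset.erase_eq_of_notMem h |>.symm ▸ rfl
    have h2 : (Finset.univ.erase i : Finset (Fin n)).card = n - 1 := by
      simp [Finset.card_erase_of_mem]
    rw [h1, h2]
    split <;> omega
  have pos : ∀ i j : Fin n, i ≠ j → θ i < θ j → 0 < d i - d j := by
    intro i j hij hlt
    rw [diff i j hij]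
    apply Finset.sum_pos
    · intro k hk
      have hki : k ≠ i := Finset.ne_of_mem_erase (Finset.mem_of_mem_erase hk)
      have hkj : k ≠ j := Finset.ne_of_mem_erase hk
      have := hμ (hθ i k (Ne.symm hki)) (hθ j k (Ne.symm hkj)) (by linarith)
      linarith
    · exact hne i j
  intro i j hij
  rcases lt_trichotomy (θ i) (θ j) with h | h | h
  · rw [Real.sign_of_pos (pos i j hij h), Real.sign_of_pos (by linarith)]
  · have h0 : d i - d j = 0 := by
      rw [diff i j hij]
      apply Finset.sum_eq_zero
      intro k _
      rw [h]
      ring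
    rw [h0, h, sub_self]
  · have := pos j i hij.symm h
    rw [Real.sign_of_neg (by linarith), Real.sign_of_neg (by linarith)]
end

section
/- For all real p ≥ 1, Γ(p+1) ≤ p^p. -/
/-!
Substituting `x = p t` in Euler's integral gives `Γ(p + 1) = p ^ (p + 1) ∫₀^∞ (t e^{-t}) ^ p dt`.
Since `t e^{-t} ≤ e^{-1}` and `p ≥ 1`, the integrand is at most `e^{1-p} t e^{-t}`, whose integral
is `e^{1-p} Γ(2) = e^{1-p}`. Hence `Γ(p + 1) ≤ p ^ p · (p e^{1-p}) ≤ p ^ p`.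
-/

open Real MeasureTheory Set

namespace Real

lemma rpow_le_exp_one_sub_mul {u p : ℝ} (hu₀ : 0 ≤ u) (hu : u ≤ exp (-1)) (hp : 1 ≤ p) :
    u ^ p ≤ exp (1 - p) * u := by
  calc u ^ p = u ^ (p - 1) * u := by
        rw [← rpow_add_one' hu₀ (by linarith), sub_add_cancel]
    _ ≤ exp (-1) ^ (p - 1) * u := by gcongr
    _ = exp (1 - p) * u := by rw [← exp_mul]; ring_nf

lemma rpow_mul_exp_neg_mul_le {p t : ℝ} (hp : 1 ≤ p) (ht : 0 ≤ t) :
    t ^ p * exp (-(p * t)) ≤ exp (1 - p) * (t * exp (-t)) := by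
  have h : t ^ p * exp (-(p * t)) = (t * exp (-t)) ^ p := by
    rw [mul_rpow ht (exp_nonneg _), ← exp_mul]; ring_nf
  rw [h]
  exact rpow_le_exp_one_sub_mul (by positivity) (mul_exp_neg_le_exp_neg_one t) hp

lemma mul_exp_one_sub_le_one (x : ℝ) : x * exp (1 - x) ≤ 1 := by
  calc x * exp (1 - x) = exp 1 * (x * exp (-x)) := by rw [sub_eq_add_neg, exp_add]; ring
    _ ≤ exp 1 * exp (-1) := by gcongr; exact mul_exp_neg_le_exp_neg_one x
    _ = 1 := by rw [← exp_add, add_neg_cancel, exp_zero]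

lemma integral_mul_exp_neg_Ioi : ∫ t in Ioi (0 : ℝ), t * exp (-t) = 1 := by
  simpa [show (2 : ℝ) - 1 = 1 by norm_num] using
    integral_rpow_mul_exp_neg_mul_Ioi (a := 2) (r := 1) two_pos one_pos

lemma Gamma_add_one_eq_rpow_mul_integral {p : ℝ} (hp : 0 < p) :
    Gamma (p + 1) = p ^ (p + 1) * ∫ t in Ioi 0, t ^ p * exp (-(p * t)) := by
  have h := integral_rpow_mul_exp_neg_mul_Ioi (by linarith : 0 < p + 1) hp
  rw [add_sub_cancel_right] at h
  rw [h, ← mul_assoc, ← mul_rpow hp.le (by positivity), mul_one_div_cancel hp.ne', one_rpow,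
    one_mul]

lemma integral_rpow_mul_exp_neg_mul_le {p : ℝ} (hp : 1 ≤ p) :
    ∫ t in Ioi 0, t ^ p * exp (-(p * t)) ≤ exp (1 - p) := by
  have hint : IntegrableOn (fun t : ℝ ↦ t * exp (-t)) (Ioi 0) := by
    simpa using integrableOn_rpow_mul_exp_neg_mul_rpow (s := 1) (p := 1) (b := 1)
      (by norm_num) one_pos one_pos
  calc ∫ t in Ioi 0, t ^ p * exp (-(p * t))
      ≤ ∫ t in Ioi 0, exp (1 - p) * (t * exp (-t)) :=
        setIntegral_mono_of_nonneg
          (fun t ht ↦ mul_nonneg (rpow_nonneg (le_of_lt ht) p) (exp_nonneg _))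
          (fun t ht ↦ rpow_mul_exp_neg_mul_le hp (le_of_lt ht)) (hint.const_mul _)
    _ = exp (1 - p) := by rw [integral_const_mul, integral_mul_exp_neg_Ioi, mul_one]

lemma Gamma_add_one_le_rpow_mul_exp {p : ℝ} (hp : 1 ≤ p) :
    Gamma (p + 1) ≤ p ^ (p + 1) * exp (1 - p) := by
  rw [Gamma_add_one_eq_rpow_mul_integral (by linarith)]
  gcongr
  exact integral_rpow_mul_exp_neg_mul_le hp

end Real

theorem gamma_succ_le_pow_self (p : ℝ) (hp : 1 ≤ p) :
    Real.Gamma (p + 1) ≤ p ^ p := by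
  have hp₀ : 0 < p := by linarith
  calc Real.Gamma (p + 1) ≤ p ^ (p + 1) * exp (1 - p) := Real.Gamma_add_one_le_rpow_mul_exp hp
    _ = p ^ p * (p * exp (1 - p)) := by rw [rpow_add_one hp₀.ne']; ring
    _ ≤ p ^ p * 1 := by gcongr; exact mul_exp_one_sub_le_one p
    _ = p ^ p := mul_one _
end

section
/- Let X be a geometric random variable on ℕ₀ with P(X = a) = (1-q)^a · q for q ∈ (0,1). Then for every p ≥ 1, E[X^p]^{1/p} ≤ -2p / log(1-q); i.e., X is sub-exponential with parameter -2/log(1-q). -/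
theorem geometric_subexponential (q p : ℝ) (hq0 : 0 < q) (hq1 : q < 1) (hp : 1 ≤ p) :
    (∑' a : ℕ, (a : ℝ) ^ p * ((1 - q) ^ a * q)) ^ (1 / p) ≤ -2 * p / Real.log (1 - q) := by
  have hp0 : 0 < p := lt_of_lt_of_le one_pos hp
  set r : ℝ := 1 - q with hr
  have hr0 : 0 < r := by linarith
  have hr1 : r < 1 := by linarith
  have hc : 0 < -Real.log r := by
    have := Real.log_neg hr0 hr1
    linarith
  set c : ℝ := -Real.log r with hcdef
  set s : ℝ := Real.sqrt r with hs
  have hs0 : 0 < s := Real.sqrt_pos.mpr hr0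
  have hs1 : s < 1 := by
    rw [hs, show (1:ℝ) = Real.sqrt 1 from (Real.sqrt_one).symm]
    exact Real.sqrt_lt_sqrt hr0.le hr1
  have hss : s * s = r := Real.mul_self_sqrt hr0.le
  have hecpos : 0 < Real.exp 1 * c := mul_pos (Real.exp_pos 1) hc
  have hbpos : 0 < 2 * p / (Real.exp 1 * c) := div_pos (by linarith) hecpos
  set M : ℝ := (2 * p / (Real.exp 1 * c)) ^ p with hM
  have hM0 : 0 ≤ M := Real.rpow_nonneg hbpos.le p
  -- log s = -(c/2)
  have hlogs : Real.log s = -(c / 2) := by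
    rw [hs, Real.log_sqrt hr0.le, hcdef]; ring
  have hsexp : s = Real.exp (-(c / 2)) := by
    rw [← hlogs, Real.exp_log hs0]
  -- pointwise bound : (a:ℝ)^p * s^a ≤ M
  have key : ∀ a : ℕ, (a : ℝ) ^ p * s ^ a ≤ M := by
    intro a
    rcases Nat.eq_zero_or_pos a with h0 | h0
    · subst h0
      simp [Real.zero_rpow hp0.ne', hM0]
    · have hx0 : (0:ℝ) < (a : ℝ) := by exact_mod_cast h0
      have hsa : s ^ a = Real.exp (-(c / 2) * a) := by
        rw [hsexp, ← Real.exp_nat_mul]; ring_nf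
      -- inner : a * exp (-(c/(2p)) * a) ≤ 2p/(e*c)
      set t : ℝ := c / (2 * p) * a with ht
      have ht0 : 0 ≤ t := by positivity
      have htexp : t * Real.exp (-t) ≤ Real.exp (-1) := by
        have h1 : t ≤ Real.exp (t - 1) := by
          have := Real.add_one_le_exp (t - 1)
          linarith
        calc t * Real.exp (-t) ≤ Real.exp (t - 1) * Real.exp (-t) :=
              mul_le_mul_of_nonneg_right h1 (Real.exp_nonneg _)
          _ = Real.exp (-1) := by rw [← Real.exp_add]; ring_nf
      have hinner : (a : ℝ) * Real.exp (-(c / (2 * p)) * a) ≤ 2 * p / (Real.exp 1 * c) := by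
        have hxt : (a : ℝ) = 2 * p / c * t := by
          rw [ht]; field_simp
        have harg : -(c / (2 * p)) * (a : ℝ) = -t := by rw [ht]; ring
        have : (a : ℝ) * Real.exp (-(c / (2 * p)) * a) = 2 * p / c * (t * Real.exp (-t)) := by
          rw [harg]; nth_rewrite 1 [hxt]; ring
        rw [this]
        have h2 : 2 * p / c * (t * Real.exp (-t)) ≤ 2 * p / c * Real.exp (-1) :=
          mul_le_mul_of_nonneg_left htexp (by positivity)
        calc 2 * p / c * (t * Real.exp (-t)) ≤ 2 * p / c * Real.exp (-1) := h2
          _ = 2 * p / (Real.exp 1 * c) := by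
              rw [Real.exp_neg]; field_simp
      -- raise to power p
      have hsplit : (a : ℝ) ^ p * s ^ a
          = ((a : ℝ) * Real.exp (-(c / (2 * p)) * a)) ^ p := by
        rw [Real.mul_rpow hx0.le (Real.exp_nonneg _), ← Real.exp_mul, hsa]
        congr 2
        field_simp
      rw [hsplit, hM]
      exact Real.rpow_le_rpow (by positivity) hinner hp0.le
  -- term bound
  have term_le : ∀ a : ℕ, (a : ℝ) ^ p * (r ^ a * q) ≤ q * M * s ^ a := by
    intro a
    have hra : r ^ a = s ^ a * s ^ a := by rw [← hss, mul_pow]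
    have h1 : (a : ℝ) ^ p * (r ^ a * q) = ((a : ℝ) ^ p * s ^ a) * (q * s ^ a) := by
      rw [hra]; ring
    rw [h1]
    have h2 : ((a : ℝ) ^ p * s ^ a) * (q * s ^ a) ≤ M * (q * s ^ a) :=
      mul_le_mul_of_nonneg_right (key a) (by positivity)
    calc _ ≤ M * (q * s ^ a) := h2
      _ = q * M * s ^ a := by ring
  have term_nonneg : ∀ a : ℕ, 0 ≤ (a : ℝ) ^ p * (r ^ a * q) := by
    intro a; positivity
  have hsum2 : Summable (fun a : ℕ => q * M * s ^ a) :=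
    (summable_geometric_of_lt_one hs0.le hs1).mul_left _
  have hsum1 : Summable (fun a : ℕ => (a : ℝ) ^ p * (r ^ a * q)) :=
    Summable.of_nonneg_of_le term_nonneg term_le hsum2
  have htsum : (∑' a : ℕ, (a : ℝ) ^ p * (r ^ a * q)) ≤ q * M * (1 - s)⁻¹ := by
    calc (∑' a : ℕ, (a : ℝ) ^ p * (r ^ a * q)) ≤ ∑' a : ℕ, q * M * s ^ a :=
          Summable.tsum_le_tsum term_le hsum1 hsum2
      _ = q * M * ∑' a : ℕ, s ^ a := tsum_mul_left
      _ = q * M * (1 - s)⁻¹ := by rw [tsum_geometric_of_lt_one hs0.le hs1]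
  -- q * M * (1-s)⁻¹ = (1+s) * M ≤ 2 M ≤ e^p M = (2p/c)^p
  have hq_eq : q = (1 - s) * (1 + s) := by
    have : r = s * s := hss.symm
    have hq' : q = 1 - r := by rw [hr]; ring
    rw [hq', this]; ring
  have h1s : (0:ℝ) < 1 - s := by linarith
  have hqM : q * M * (1 - s)⁻¹ = (1 + s) * M := by
    rw [hq_eq]; field_simp
  have hfinalbound : q * M * (1 - s)⁻¹ ≤ (2 * p / c) ^ p := by
    rw [hqM]
    have h2e : (1 + s) ≤ Real.exp 1 ^ p := by
      have he2 : (2:ℝ) ≤ Real.exp 1 := by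
        have := Real.add_one_le_exp 1; linarith
      have hep : Real.exp 1 ≤ Real.exp 1 ^ p := by
        calc Real.exp 1 = Real.exp 1 ^ (1:ℝ) := (Real.rpow_one _).symm
          _ ≤ Real.exp 1 ^ p :=
            Real.rpow_le_rpow_left_iff (by linarith [Real.add_one_le_exp 1]) |>.mpr hp
      linarith
    calc (1 + s) * M ≤ Real.exp 1 ^ p * M :=
          mul_le_mul_of_nonneg_right h2e hM0
      _ = (2 * p / c) ^ p := by
          rw [hM, ← Real.mul_rpow (Real.exp_nonneg 1) hbpos.le]
          congr 1
          field_simp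
  have hS : (∑' a : ℕ, (a : ℝ) ^ p * (r ^ a * q)) ≤ (2 * p / c) ^ p :=
    le_trans htsum hfinalbound
  have hSnn : 0 ≤ (∑' a : ℕ, (a : ℝ) ^ p * (r ^ a * q)) :=
    tsum_nonneg term_nonneg
  have hrhs : -2 * p / Real.log r = 2 * p / c := by
    rw [hcdef, div_neg]; ring
  rw [hrhs]
  calc (∑' a : ℕ, (a : ℝ) ^ p * (r ^ a * q)) ^ (1 / p)
      ≤ ((2 * p / c) ^ p) ^ (1 / p) :=
        Real.rpow_le_rpow hSnn hS (by positivity)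
    _ = (2 * p / c) ^ (p * (1 / p)) := by
        rw [← Real.rpow_mul (by positivity)]
    _ = 2 * p / c := by
        rw [mul_one_div, div_self hp0.ne', Real.rpow_one]
end
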